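/- Every CPCP linear map is CPDNN: if Φ : M_n(ℂ) → M_m(ℂ) is linear and for every k ∈ ℕ the map (id_k ⊗ Φ) sends completely positive matrices in M_{kn} to completely positive matrices in M_{km}, then for every k ∈ ℕ the map (id_k ⊗ Φ) sends doubly nonnegative matrices in M_{kn} to doubly nonnegative matrices in M_{km}. -/

import Mathlib

open Matrix
open scoped ComplexOrder

/-- A complex matrix is completely positive if it is a finite sum of rank-one
matrices `x xᵀ` with `x` a real entrywise nonnegative vector (viewed in `ℂ`). -/
def IsCPMat {ι : Type*} [Fintype ι] (A : Matrix ι ι ℂ) : Prop :=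
  ∃ (s : ℕ) (x : Fin s → ι → ℝ), (∀ t i, 0 ≤ x t i) ∧
    ∀ i j, A i j = ((∑ t, x t i * x t j : ℝ) : ℂ)

/-- A complex matrix is doubly nonnegative if it is positive semidefinite and
every entry is a nonnegative real number. -/
def IsDNNMat {ι : Type*} [Fintype ι] (A : Matrix ι ι ℂ) : Prop :=
  A.PosSemidef ∧ ∀ i j, 0 ≤ (A i j).re ∧ (A i j).im = 0

/-- The map `id_k ⊗ Φ` acting blockwise: the `((a,p),(b,q))` entry of the output
is `Φ(X_{ab})_{pq}`, where `X_{ab}` is the `(a,b)` block of `X`. -/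
def idTensor {n m : ℕ} (Φ : Matrix (Fin n) (Fin n) ℂ →ₗ[ℂ] Matrix (Fin m) (Fin m) ℂ)
    (k : ℕ) (X : Matrix (Fin k × Fin n) (Fin k × Fin n) ℂ) :
    Matrix (Fin k × Fin m) (Fin k × Fin m) ℂ :=
  Matrix.of fun ap bq => Φ (Matrix.of fun i j => X (ap.1, i) (bq.1, j)) ap.2 bq.2

/-- `Φ` is completely positive as a linear map between matrix algebras. -/
def IsCPMap {n m : ℕ} (Φ : Matrix (Fin n) (Fin n) ℂ →ₗ[ℂ] Matrix (Fin m) (Fin m) ℂ) : Prop :=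
  ∀ (k : ℕ) (X : Matrix (Fin k × Fin n) (Fin k × Fin n) ℂ),
    X.PosSemidef → (idTensor Φ k X).PosSemidef

/-- `Φ` is trace-preserving. -/
def IsTP {n m : ℕ} (Φ : Matrix (Fin n) (Fin n) ℂ →ₗ[ℂ] Matrix (Fin m) (Fin m) ℂ) : Prop :=
  ∀ X, (Φ X).trace = X.trace

/-- `Φ` is CPCP: `id_k ⊗ Φ` maps completely positive matrices to completely
positive matrices for every `k`. -/
def IsCPCP {n m : ℕ} (Φ : Matrix (Fin n) (Fin n) ℂ →ₗ[ℂ] Matrix (Fin m) (Fin m) ℂ) : Prop :=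
  ∀ (k : ℕ) (X : Matrix (Fin k × Fin n) (Fin k × Fin n) ℂ),
    IsCPMat X → IsCPMat (idTensor Φ k X)

/-- `Φ` is CPDNN: `id_k ⊗ Φ` maps doubly nonnegative matrices to doubly
nonnegative matrices for every `k`. -/
def IsCPDNN {n m : ℕ} (Φ : Matrix (Fin n) (Fin n) ℂ →ₗ[ℂ] Matrix (Fin m) (Fin m) ℂ) : Prop :=
  ∀ (k : ℕ) (X : Matrix (Fin k × Fin n) (Fin k × Fin n) ℂ),
    IsDNNMat X → IsDNNMat (idTensor Φ k X)

/-- The Choi matrix `J(Φ) = Σ_{i,j} E_{ij} ⊗ Φ(E_{ij})`, with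
`((i,p),(j,q))` entry equal to `Φ(E_{ij})_{pq}`. -/
def choi {n m : ℕ} (Φ : Matrix (Fin n) (Fin n) ℂ →ₗ[ℂ] Matrix (Fin m) (Fin m) ℂ) :
    Matrix (Fin n × Fin m) (Fin n × Fin m) ℂ :=
  Matrix.of fun ip jq => Φ (Matrix.single ip.1 jq.1 1) ip.2 jq.2

/-!
Feeding the completely positive matrix `∑ᵢⱼ Eᵢⱼ ⊗ Eᵢⱼ` to `id_n ⊗ Φ` produces the Choi matrix, so
a CPCP map has `J(Φ) = ∑ₜ xₜ xₜᵀ` with `xₜ ≥ 0`. Reshaping `xₜ` into an `n × m` matrix `Vₜ` gives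
the Kraus form `(id_k ⊗ Φ)(X) = ∑ₜ (1 ⊗ Vₜ)ᴴ X (1 ⊗ Vₜ)`, which is positive semidefinite whenever
`X` is. The entries `(id_k ⊗ Φ)(X)_{(a,p),(b,q)} = ∑ᵢⱼ X_{(a,i),(b,j)} J(Φ)_{(i,p),(j,q)}` are
nonnegative whenever those of `X` are.
-/

open scoped Kronecker

lemma isDNNMat_iff {ι : Type*} [Fintype ι] (A : Matrix ι ι ℂ) :
    IsDNNMat A ↔ A.PosSemidef ∧ ∀ i j, 0 ≤ A i j := by
  simp only [IsDNNMat, Complex.nonneg_iff, eq_comm (a := (0 : ℝ))]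

lemma IsCPMat.nonneg {ι : Type*} [Fintype ι] {A : Matrix ι ι ℂ} (hA : IsCPMat A) (i j : ι) :
    0 ≤ A i j := by
  obtain ⟨s, x, hx, hA⟩ := hA
  rw [hA i j]
  exact_mod_cast Finset.sum_nonneg fun t _ => mul_nonneg (hx t i) (hx t j)

lemma IsCPMat.exists_eq_sum_star_mul {ι : Type*} [Fintype ι] {A : Matrix ι ι ℂ}
    (hA : IsCPMat A) : ∃ (s : ℕ) (v : Fin s → ι → ℂ), ∀ i j, A i j = ∑ t, star (v t i) * v t j := by
  obtain ⟨s, x, -, hA⟩ := hA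
  exact ⟨s, fun t i => x t i, fun i j => by simp [hA i j]⟩

lemma one_kronecker_conjTranspose_mul_mul_apply {R κ ι ι' : Type*} [CommSemiring R] [StarRing R]
    [Fintype κ] [DecidableEq κ] [Fintype ι]
    (V : Matrix ι ι' R) (X : Matrix (κ × ι) (κ × ι) R) (a b : κ) (p q : ι') :
    (((1 : Matrix κ κ R) ⊗ₖ V)ᴴ * X * ((1 : Matrix κ κ R) ⊗ₖ V)) (a, p) (b, q) =
      ∑ i, ∑ j, star (V i p) * X (a, i) (b, j) * V j q := by
  simp only [Matrix.mul_apply, conjTranspose_apply, kroneckerMap_apply, Matrix.one_apply, ite_mul,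
    one_mul, zero_mul, apply_ite star, star_zero, Fintype.sum_prod_type, Finset.sum_ite_irrel,
    Finset.sum_const_zero, Finset.sum_ite_eq', Finset.mem_univ, ↓reduceIte, mul_ite,
    Finset.sum_mul, mul_zero]
  exact Finset.sum_comm

/-- The unnormalised maximally entangled state `∑ᵢⱼ Eᵢⱼ ⊗ Eᵢⱼ`, whose `(a, b)` block is `Eₐᵦ`. -/
def maxEntangled (n : ℕ) : Matrix (Fin n × Fin n) (Fin n × Fin n) ℂ :=
  of fun ai bj => ((if ai.1 = ai.2 then 1 else 0 : ℝ) * (if bj.1 = bj.2 then 1 else 0 : ℝ) : ℝ)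

lemma isCPMat_maxEntangled (n : ℕ) : IsCPMat (maxEntangled n) :=
  ⟨1, fun _ ai => if ai.1 = ai.2 then 1 else 0, fun _ _ => by positivity, fun _ _ => by
    simp [maxEntangled]⟩

section Choi

variable {n m : ℕ} (Φ : Matrix (Fin n) (Fin n) ℂ →ₗ[ℂ] Matrix (Fin m) (Fin m) ℂ)

lemma apply_eq_sum_choi (M : Matrix (Fin n) (Fin n) ℂ) (p q : Fin m) :
    Φ M p q = ∑ i, ∑ j, M i j * choi Φ (i, p) (j, q) := by
  conv_lhs => rw [M.matrix_eq_sum_single]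
  simp only [map_sum, Matrix.sum_apply, choi, of_apply]
  refine Finset.sum_congr rfl fun i _ => Finset.sum_congr rfl fun j _ => ?_
  rw [show single i j (M i j) = M i j • single i j 1 by rw [smul_single, smul_eq_mul, mul_one],
    map_smul, Matrix.smul_apply, smul_eq_mul]

lemma idTensor_apply_eq_sum_choi {k : ℕ} (X : Matrix (Fin k × Fin n) (Fin k × Fin n) ℂ)
    (a b : Fin k) (p q : Fin m) :
    idTensor Φ k X (a, p) (b, q) = ∑ i, ∑ j, X (a, i) (b, j) * choi Φ (i, p) (j, q) :=
  apply_eq_sum_choi Φ _ p q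

lemma idTensor_eq_sum_kraus {s : ℕ} (V : Fin s → Matrix (Fin n) (Fin m) ℂ)
    (hV : ∀ i j p q, choi Φ (i, p) (j, q) = ∑ t, star (V t i p) * V t j q)
    {k : ℕ} (X : Matrix (Fin k × Fin n) (Fin k × Fin n) ℂ) :
    idTensor Φ k X =
      ∑ t, ((1 : Matrix (Fin k) (Fin k) ℂ) ⊗ₖ V t)ᴴ * X * ((1 : Matrix (Fin k) (Fin k) ℂ) ⊗ₖ V t) := by
  ext ⟨a, p⟩ ⟨b, q⟩
  simp only [idTensor_apply_eq_sum_choi, hV, Matrix.sum_apply,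
    one_kronecker_conjTranspose_mul_mul_apply, Finset.mul_sum]
  conv_rhs => rw [Finset.sum_comm]; enter [2, i]; rw [Finset.sum_comm]
  exact Finset.sum_congr rfl fun i _ => Finset.sum_congr rfl fun j _ =>
    Finset.sum_congr rfl fun t _ => by ring

lemma isCPMap_of_isCPMat_choi (hΦ : IsCPMat (choi Φ)) : IsCPMap Φ := by
  obtain ⟨s, v, hv⟩ := hΦ.exists_eq_sum_star_mul
  intro k X hX
  rw [idTensor_eq_sum_kraus Φ (fun t => of fun i p => v t (i, p)) (fun i j p q => hv _ _)]
  exact posSemidef_sum _ fun t _ => hX.conjTranspose_mul_mul_same _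

lemma idTensor_apply_nonneg (hΦ : ∀ ip jq, 0 ≤ choi Φ ip jq) {k : ℕ}
    {X : Matrix (Fin k × Fin n) (Fin k × Fin n) ℂ} (hX : ∀ ai bj, 0 ≤ X ai bj) (ap bq : Fin k × Fin m) :
    0 ≤ idTensor Φ k X ap bq := by
  rw [idTensor_apply_eq_sum_choi]
  exact Finset.sum_nonneg fun i _ => Finset.sum_nonneg fun j _ => mul_nonneg (hX _ _) (hΦ _ _)

lemma idTensor_maxEntangled : idTensor Φ n (maxEntangled n) = choi Φ := by
  ext ⟨a, p⟩ ⟨b, q⟩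
  have hblock : (of fun i j => maxEntangled n (a, i) (b, j)) = single a b 1 := by
    ext i j
    by_cases ha : a = i <;> by_cases hb : b = j <;> simp [maxEntangled, ha, hb]
  simp only [idTensor, choi, of_apply, hblock]

lemma IsCPCP.isCPMat_choi (hΦ : IsCPCP Φ) : IsCPMat (choi Φ) :=
  idTensor_maxEntangled Φ ▸ hΦ n _ (isCPMat_maxEntangled n)

end Choi

/-- Every CPCP linear map is CPDNN. -/
theorem stmt12 (n m : ℕ)
    (Φ : Matrix (Fin n) (Fin n) ℂ →ₗ[ℂ] Matrix (Fin m) (Fin m) ℂ)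
    (hCPCP : IsCPCP Φ) : IsCPDNN Φ := by
  have hchoi := hCPCP.isCPMat_choi
  intro k X hX
  rw [isDNNMat_iff] at hX ⊢
  exact ⟨isCPMap_of_isCPMat_choi Φ hchoi k X hX.1, idTensor_apply_nonneg Φ hchoi.nonneg hX.2⟩
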